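/- Let μ be a positive Radon measure and P a dyadic cube. Define the bad part b_P = f𝟙_P − ⟨f𝟙_P⟩_{P̂} 𝟙_{P̂}, where P̂ is the parent of P. Then for a dyadic cube I (of the same grid): (a) if P̂ ∩ Î = ∅ then ⟨b_P, h_I⟩ = 0; (b) if P̂ ⊊ Î then ⟨b_P, h_I⟩ = 0; (c) if Î ⊆ P' for a child P' of P̂ with P' ≠ P, then ⟨b_P, h_I⟩ = 0. Moreover, when ⟨b_P, h_I⟩ ≠ 0 one has the bound |⟨b_P, h_I⟩| ≲ μ(I)^{-1/2} ‖f𝟙_{P ∩ Î}‖_{L¹(μ)}. -/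

import Mathlib

/-!
Dyadic cubes are read off from the integer parts `⌊xᵢ 2ᵏ⌋`, so two of them are nested or disjoint,
and of equal side they are equal or disjoint. The Haar function `h_I` vanishes off `Î`, has mean
zero and is constant on `I` and on `Î ∖ I`; `b_P` vanishes off `P̂`, has mean zero and is constant
on `P̂ ∖ P`. This gives the three vanishing cases. In the remaining case `Î ⊆ P̂`, where `b_P` is
`f𝟙_P` minus a constant, so `⟨b_P, h_I⟩ = ⟨f𝟙_P, h_I⟩`, and the bound follows from
`|h_I| ≤ μ(I)^{-1/2} 𝟙_Î`.
-/

open MeasureTheory Set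
open scoped ENNReal

noncomputable section

/-- Half-open dyadic cube `∏ᵢ 2^{-k}[jᵢ, jᵢ+1)` of side length `2^(-k)`. -/
def dyadicCube (n : ℕ) (k : ℤ) (j : Fin n → ℤ) : Set (Fin n → ℝ) :=
  {x | ∀ i, (j i : ℝ) * (2:ℝ) ^ (-k) ≤ x i ∧ x i < ((j i : ℝ) + 1) * (2:ℝ) ^ (-k)}

/-- The `μ`-average of `f` over `A` (zero when `μ(A) = 0`). -/
def avgOn {X : Type*} [MeasurableSpace X] (μ : Measure X) (f : X → ℝ) (A : Set X) : ℝ :=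
  if μ A = 0 then 0 else (μ A).toReal⁻¹ * ∫ x in A, f x ∂μ

/-- The Haar function adapted to `I` with parent `Ih` (zero when `μ(I) = 0`). -/
def haarFn {X : Type*} [MeasurableSpace X] (μ : Measure X) (I Ih : Set X) : X → ℝ :=
  fun x => if μ I = 0 then 0 else
    Real.sqrt (μ I).toReal * ((μ I).toReal⁻¹ * Set.indicator I (fun _ => (1:ℝ)) x -
      (μ Ih).toReal⁻¹ * Set.indicator Ih (fun _ => (1:ℝ)) x)

/-- The bad part `b_P = f𝟙_P − ⟨f𝟙_P⟩_{P̂} 𝟙_{P̂}` of a Calderón–Zygmund decomposition. -/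
def badPart {X : Type*} [MeasurableSpace X] (μ : Measure X) (f : X → ℝ)
    (P Ph : Set X) : X → ℝ :=
  fun x => Set.indicator P f x -
    avgOn μ (Set.indicator P f) Ph * Set.indicator Ph (fun _ => (1:ℝ)) x

section DyadicCube

variable {n : ℕ}

lemma mem_dyadicCube_iff {k : ℤ} {j : Fin n → ℤ} {x : Fin n → ℝ} :
    x ∈ dyadicCube n k j ↔ ∀ i, ⌊x i * 2 ^ k⌋ = j i := by
  have h2 : (0 : ℝ) < 2 ^ k := by positivity
  simp only [dyadicCube, mem_ofPred_eq, Int.floor_eq_iff, zpow_neg, ← div_eq_mul_inv,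
    div_le_iff₀ h2, lt_div_iff₀ h2]

lemma floor_mul_two_zpow_of_le {k k' : ℤ} (hk : k' ≤ k) (r : ℝ) :
    ⌊r * 2 ^ k'⌋ = ⌊r * 2 ^ k⌋ / 2 ^ (k - k').toNat := by
  have : r * 2 ^ k' = r * 2 ^ k / ((2 ^ (k - k').toNat : ℕ) : ℝ) := by
    rw [Nat.cast_pow, Nat.cast_ofNat, ← zpow_natCast, Int.toNat_of_nonneg (by omega),
      mul_div_assoc, ← zpow_sub₀ two_ne_zero, sub_sub_cancel]
  rw [this, Int.floor_div_natCast]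
  norm_cast

lemma measurableSet_dyadicCube (k : ℤ) (j : Fin n → ℤ) : MeasurableSet (dyadicCube n k j) := by
  have : dyadicCube n k j = ⋂ i, (fun x : Fin n → ℝ => x i) ⁻¹'
      Ico ((j i : ℝ) * 2 ^ (-k)) ((j i + 1) * 2 ^ (-k)) := by
    ext x; simp [dyadicCube]
  rw [this]
  exact .iInter fun i => measurable_pi_apply i measurableSet_Ico

lemma dyadicCube_nonempty (k : ℤ) (j : Fin n → ℤ) : (dyadicCube n k j).Nonempty :=
  ⟨fun i => j i * 2 ^ (-k), mem_dyadicCube_iff.2 fun i => by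
    rw [zpow_neg, mul_assoc, inv_mul_cancel₀ (by positivity), mul_one, Int.floor_intCast]⟩

lemma dyadicCube_subset_of_not_disjoint {k k' : ℤ} (hk : k' ≤ k) {j j' : Fin n → ℤ}
    (h : ¬Disjoint (dyadicCube n k j) (dyadicCube n k' j')) :
    dyadicCube n k j ⊆ dyadicCube n k' j' := by
  obtain ⟨x, hx, hx'⟩ := not_disjoint_iff.1 h
  intro y hy
  rw [mem_dyadicCube_iff] at hx hx' hy ⊢
  intro i
  rw [← hx' i, floor_mul_two_zpow_of_le hk, floor_mul_two_zpow_of_le hk, hx i, hy i]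

lemma dyadicCube_subset_or_disjoint {k k' : ℤ} (hk : k' ≤ k) (j j' : Fin n → ℤ) :
    dyadicCube n k j ⊆ dyadicCube n k' j' ∨ Disjoint (dyadicCube n k j) (dyadicCube n k' j') :=
  (em' _).imp_left (dyadicCube_subset_of_not_disjoint hk)

lemma dyadicCube_disjoint_of_ne {k : ℤ} {j j' : Fin n → ℤ} (h : j ≠ j') :
    Disjoint (dyadicCube n k j) (dyadicCube n k j') := by
  refine Set.disjoint_left.2 fun x hx hx' => h ?_
  rw [mem_dyadicCube_iff] at hx hx'
  exact funext fun i => (hx i).symm.trans (hx' i)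

lemma lt_of_dyadicCube_ssubset {k k' : ℤ} {j j' : Fin n → ℤ}
    (h : dyadicCube n k j ⊂ dyadicCube n k' j') : k' < k := by
  by_contra! hk
  refine h.2 (dyadicCube_subset_of_not_disjoint hk fun hd => ?_)
  obtain ⟨x, hx⟩ := dyadicCube_nonempty k j
  exact hd.ne_of_mem (h.1 hx) hx rfl

lemma dyadicCube_subset_or_subset_sdiff_of_ssubset {k k' : ℤ} {j j' : Fin n → ℤ}
    (h : dyadicCube n k j ⊂ dyadicCube n (k' - 1) j') (i : Fin n → ℤ) :
    dyadicCube n k j ⊆ dyadicCube n k' i ∨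
      dyadicCube n k j ⊆ dyadicCube n (k' - 1) j' \ dyadicCube n k' i := by
  have hk : k' ≤ k := by
    have := lt_of_dyadicCube_ssubset h
    omega
  exact (dyadicCube_subset_or_disjoint hk j i).imp id fun hd => subset_sdiff.2 ⟨h.1, hd⟩

lemma dyadicCube_superset_or_ssubset_or_disjoint (k k' : ℤ) (j j' : Fin n → ℤ) :
    dyadicCube n k' j' ⊆ dyadicCube n k j ∨ dyadicCube n k j ⊂ dyadicCube n k' j' ∨
      Disjoint (dyadicCube n k j) (dyadicCube n k' j') := by
  rcases le_total k' k with hk | hk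
  · rcases dyadicCube_subset_or_disjoint hk j j' with hs | hd
    · rcases hs.eq_or_ssubset with he | hss
      · exact .inl he.symm.subset
      · exact .inr (.inl hss)
    · exact .inr (.inr hd)
  · exact (dyadicCube_subset_or_disjoint hk j' j).imp id fun hd => .inr hd.symm

end DyadicCube

section Pairing

variable {X : Type*} [MeasurableSpace X] {μ : Measure X} {f g : X → ℝ} {P Ph I Ih : Set X}
  {x : X}

lemma badPart_of_mem (hx : x ∈ Ph) :
    badPart μ f P Ph x = P.indicator f x - avgOn μ (P.indicator f) Ph := by
  simp [badPart, hx]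

lemma badPart_of_notMem (hP : P ⊆ Ph) (hx : x ∉ Ph) : badPart μ f P Ph x = 0 := by
  simp [badPart, hx, notMem_subset hP hx]

lemma integral_badPart (hf : Integrable f μ) (hP : P ⊆ Ph) (hPm : MeasurableSet P)
    (hPhm : MeasurableSet Ph) (hfin : μ Ph ≠ ⊤) : ∫ x, badPart μ f P Ph x ∂μ = 0 := by
  have hint : Integrable (Ph.indicator fun _ => (1 : ℝ)) μ :=
    (integrable_indicator_iff hPhm).2 (integrableOn_const hfin)
  simp only [badPart]
  rw [integral_sub (hf.indicator hPm) (hint.const_mul _), integral_const_mul,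
    integral_indicator hPm, integral_indicator_const _ hPhm, smul_eq_mul, mul_one, avgOn]
  split_ifs with h0
  · rw [Measure.restrict_eq_zero.2 (measure_mono_null hP h0), integral_zero_measure]
    ring
  · rw [setIntegral_indicator hPm, inter_eq_right.2 hP, Measure.real,
      mul_comm, ← mul_assoc, mul_inv_cancel₀ (ENNReal.toReal_ne_zero.2 ⟨h0, hfin⟩), one_mul,
      sub_self]

lemma haarFn_of_notMem (hI : I ⊆ Ih) (hx : x ∉ Ih) : haarFn μ I Ih x = 0 := by
  simp [haarFn, hx, notMem_subset hI hx]

lemma haarFn_eq_of_mem_iff {y : X} (hxy : x ∈ I ↔ y ∈ I) (hxy' : x ∈ Ih ↔ y ∈ Ih) :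
    haarFn μ I Ih x = haarFn μ I Ih y := by
  have key : ∀ s : Set X, (x ∈ s ↔ y ∈ s) →
      s.indicator (fun _ => (1 : ℝ)) x = s.indicator (fun _ => 1) y := fun s h => by
    by_cases hy : y ∈ s <;> simp [hy, h]
  simp only [haarFn, key I hxy, key Ih hxy']

lemma measurable_haarFn (hIm : MeasurableSet I) (hIhm : MeasurableSet Ih) :
    Measurable (haarFn μ I Ih) := by
  unfold haarFn
  split_ifs
  · exact measurable_const
  · exact measurable_const.mul ((measurable_const.mul (measurable_const.indicator hIm)).sub
      (measurable_const.mul (measurable_const.indicator hIhm)))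

lemma abs_haarFn_le (hI : I ⊆ Ih) (hfin : μ Ih ≠ ⊤) (x : X) :
    |haarFn μ I Ih x| ≤ (√(μ I).toReal)⁻¹ * Ih.indicator 1 x := by
  by_cases hx : x ∈ Ih
  swap
  · simp [haarFn_of_notMem hI hx, hx]
  by_cases h0 : μ I = 0
  · simp [haarFn, h0]
  have hIfin : μ I ≠ ⊤ := ne_top_of_le_ne_top hfin (measure_mono hI)
  set a := (μ I).toReal
  set b := (μ Ih).toReal
  set e := I.indicator (fun _ => (1 : ℝ)) x
  have ha : 0 < a := ENNReal.toReal_pos h0 hIfin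
  have hb : 0 ≤ b⁻¹ := inv_nonneg.2 ENNReal.toReal_nonneg
  have hab : b⁻¹ ≤ a⁻¹ :=
    inv_anti₀ ha ((ENNReal.toReal_le_toReal hIfin hfin).2 (measure_mono hI))
  have he : 0 ≤ e ∧ e ≤ 1 :=
    ⟨indicator_nonneg (fun _ _ => zero_le_one) x, indicator_le_self' (fun _ _ => zero_le_one) x⟩
  have hsqrt : (√a)⁻¹ = √a * a⁻¹ := by
    field_simp
    rw [Real.sq_sqrt ha.le]
  have hh : haarFn μ I Ih x = √a * (a⁻¹ * e - b⁻¹) := by simp [haarFn, h0, hx, a, b, e]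
  rw [hh, indicator_of_mem hx, Pi.one_apply, mul_one, hsqrt, abs_mul,
    abs_of_nonneg (Real.sqrt_nonneg a)]
  gcongr
  rw [abs_le]
  constructor <;> nlinarith [inv_pos.2 ha]

lemma integrable_haarFn (hIm : MeasurableSet I) (hIhm : MeasurableSet Ih) (hI : I ⊆ Ih)
    (hfin : μ Ih ≠ ⊤) : Integrable (haarFn μ I Ih) μ :=
  .mono' (((integrable_indicator_iff hIhm).2 (integrableOn_const hfin)).const_mul _)
    (measurable_haarFn hIm hIhm).aestronglyMeasurable
    (ae_of_all _ fun x => (abs_haarFn_le hI hfin x))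

lemma integral_haarFn (hIm : MeasurableSet I) (hIhm : MeasurableSet Ih) (hI : I ⊆ Ih)
    (hfin : μ Ih ≠ ⊤) : ∫ x, haarFn μ I Ih x ∂μ = 0 := by
  by_cases h0 : μ I = 0
  · simp [haarFn, h0]
  have hIfin : μ I ≠ ⊤ := ne_top_of_le_ne_top hfin (measure_mono hI)
  have hIh0 : μ Ih ≠ 0 := fun h => h0 (measure_mono_null hI h)
  have hint : ∀ {s : Set X}, MeasurableSet s → μ s ≠ ⊤ →
      Integrable (s.indicator fun _ => (1 : ℝ)) μ := fun hs hsfin =>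
    (integrable_indicator_iff hs).2 (integrableOn_const hsfin)
  simp only [haarFn, h0, if_false]
  rw [integral_const_mul, integral_sub ((hint hIm hIfin).const_mul _)
    ((hint hIhm hfin).const_mul _), integral_const_mul, integral_const_mul,
    integral_indicator_const _ hIm, integral_indicator_const _ hIhm, smul_eq_mul, smul_eq_mul,
    Measure.real, Measure.real, mul_one, mul_one,
    inv_mul_cancel₀ (ENNReal.toReal_ne_zero.2 ⟨h0, hIfin⟩),
    inv_mul_cancel₀ (ENNReal.toReal_ne_zero.2 ⟨hIh0, hfin⟩), sub_self, mul_zero]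

lemma integrable_mul_haarFn (hg : Integrable g μ) (hIm : MeasurableSet I)
    (hIhm : MeasurableSet Ih) (hI : I ⊆ Ih) (hfin : μ Ih ≠ ⊤) :
    Integrable (fun x => g x * haarFn μ I Ih x) μ :=
  hg.mul_bdd (measurable_haarFn hIm hIhm).aestronglyMeasurable (ae_of_all _ fun x =>
    (abs_haarFn_le hI hfin x).trans
      (mul_le_of_le_one_right (by positivity) (indicator_le_self' (fun _ _ => zero_le_one) x)))

lemma abs_integral_mul_haarFn_le (hIhm : MeasurableSet Ih) (hI : I ⊆ Ih) (hfin : μ Ih ≠ ⊤)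
    (hg : Integrable g μ) :
    |∫ x, g x * haarFn μ I Ih x ∂μ| ≤ (√(μ I).toReal)⁻¹ * ∫ x in Ih, |g x| ∂μ := by
  rw [← integral_indicator hIhm, ← integral_const_mul, ← Real.norm_eq_abs]
  refine norm_integral_le_of_norm_le (((hg.abs.indicator hIhm).const_mul (√(μ I).toReal)⁻¹))
    (ae_of_all _ fun x => ?_)
  calc ‖g x * haarFn μ I Ih x‖ ≤ |g x| * ((√(μ I).toReal)⁻¹ * Ih.indicator 1 x) := by
        rw [Real.norm_eq_abs, abs_mul]
        exact mul_le_mul_of_nonneg_left (abs_haarFn_le hI hfin x) (abs_nonneg _)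
    _ = (√(μ I).toReal)⁻¹ * Ih.indicator (fun x => |g x|) x := by
        by_cases hx : x ∈ Ih <;> simp [hx, mul_comm]

lemma integral_mul_eq_zero_of_disjoint {S T : Set X} (hST : Disjoint S T)
    (hf : ∀ x ∉ S, f x = 0) (hg : ∀ x ∉ T, g x = 0) : ∫ x, f x * g x ∂μ = 0 := by
  have : (fun x => f x * g x) = 0 := funext fun x => by
    by_cases hx : x ∈ S
    · rw [hg x (hST.notMem_of_mem_left hx), mul_zero, Pi.zero_apply]
    · rw [hf x hx, zero_mul, Pi.zero_apply]
  rw [this]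
  exact integral_zero X ℝ

lemma integral_mul_eq_zero_of_eqOn_const {S : Set X} {c : ℝ} (hf : ∀ x ∉ S, f x = 0)
    (hg : ∀ x ∈ S, g x = c) (hf0 : ∫ x, f x ∂μ = 0) : ∫ x, f x * g x ∂μ = 0 := by
  have : (fun x => f x * g x) = fun x => c * f x := funext fun x => by
    by_cases hx : x ∈ S
    · rw [hg x hx, mul_comm]
    · rw [hf x hx, zero_mul, mul_zero]
  rw [this, integral_const_mul, hf0, mul_zero]

lemma integral_badPart_mul_haarFn_of_disjoint (hP : P ⊆ Ph) (hI : I ⊆ Ih)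
    (h : Disjoint Ph Ih) : ∫ x, badPart μ f P Ph x * haarFn μ I Ih x ∂μ = 0 :=
  integral_mul_eq_zero_of_disjoint h (fun _ => badPart_of_notMem hP) (fun _ => haarFn_of_notMem hI)

lemma integral_badPart_mul_haarFn_of_subset_or_subset_sdiff (hf : Integrable f μ)
    (hPm : MeasurableSet P) (hPhm : MeasurableSet Ph) (hP : P ⊆ Ph) (hfin : μ Ph ≠ ⊤)
    (hI : I ⊆ Ih) (hne : Ph.Nonempty) (hsplit : Ph ⊆ I ∨ Ph ⊆ Ih \ I) :
    ∫ x, badPart μ f P Ph x * haarFn μ I Ih x ∂μ = 0 := by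
  obtain ⟨x₀, hx₀⟩ := hne
  refine integral_mul_eq_zero_of_eqOn_const (S := Ph) (c := haarFn μ I Ih x₀) (fun _ => badPart_of_notMem hP)
    (fun x hx => haarFn_eq_of_mem_iff (y := x₀) ?_ ?_) (integral_badPart hf hP hPm hPhm hfin)
  · rcases hsplit with h | h
    · exact iff_of_true (h hx) (h hx₀)
    · exact iff_of_false (h hx).2 (h hx₀).2
  · rcases hsplit with h | h
    · exact iff_of_true (hI (h hx)) (hI (h hx₀))
    · exact iff_of_true (h hx).1 (h hx₀).1

lemma integral_badPart_mul_haarFn_of_subset_sdiff (hIm : MeasurableSet I)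
    (hIhm : MeasurableSet Ih) (hI : I ⊆ Ih) (hfin : μ Ih ≠ ⊤) (h : Ih ⊆ Ph \ P) :
    ∫ x, badPart μ f P Ph x * haarFn μ I Ih x ∂μ = 0 := by
  simp_rw [mul_comm (badPart μ f P Ph _)]
  refine integral_mul_eq_zero_of_eqOn_const (S := Ih) (c := -avgOn μ (P.indicator f) Ph) (fun _ => haarFn_of_notMem hI)
    (fun x hx => ?_) (integral_haarFn hIm hIhm hI hfin)
  rw [badPart_of_mem (h hx).1, indicator_of_notMem (h hx).2, zero_sub]

lemma integral_badPart_mul_haarFn_of_subset (hf : Integrable f μ) (hPm : MeasurableSet P)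
    (hIm : MeasurableSet I) (hIhm : MeasurableSet Ih) (hI : I ⊆ Ih) (hfin : μ Ih ≠ ⊤)
    (hIhPh : Ih ⊆ Ph) :
    ∫ x, badPart μ f P Ph x * haarFn μ I Ih x ∂μ = ∫ x, P.indicator f x * haarFn μ I Ih x ∂μ := by
  have : ∀ x, badPart μ f P Ph x * haarFn μ I Ih x =
      P.indicator f x * haarFn μ I Ih x - avgOn μ (P.indicator f) Ph * haarFn μ I Ih x := by
    intro x
    by_cases hx : x ∈ Ih
    · rw [badPart_of_mem (hIhPh hx)]; ring
    · rw [haarFn_of_notMem hI hx]; ring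
  simp_rw [this]
  rw [integral_sub (integrable_mul_haarFn (hf.indicator hPm) hIm hIhm hI hfin)
    ((integrable_haarFn hIm hIhm hI hfin).const_mul _), integral_const_mul,
    integral_haarFn hIm hIhm hI hfin, mul_zero, sub_zero]

lemma abs_integral_badPart_mul_haarFn_le (hf : Integrable f μ) (hPm : MeasurableSet P)
    (hIm : MeasurableSet I) (hIhm : MeasurableSet Ih) (hI : I ⊆ Ih) (hfin : μ Ih ≠ ⊤)
    (hIhPh : Ih ⊆ Ph) :
    |∫ x, badPart μ f P Ph x * haarFn μ I Ih x ∂μ| ≤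
      (√(μ I).toReal)⁻¹ * ∫ x in P ∩ Ih, |f x| ∂μ := by
  rw [integral_badPart_mul_haarFn_of_subset hf hPm hIm hIhm hI hfin hIhPh]
  refine (abs_integral_mul_haarFn_le hIhm hI hfin (hf.indicator hPm)).trans_eq ?_
  simp_rw [← Real.norm_eq_abs, norm_indicator_eq_indicator_norm]
  rw [setIntegral_indicator hPm, inter_comm]

end Pairing

theorem stmt15 (n : ℕ) (μ : Measure (Fin n → ℝ))
    (kP kI : ℤ) (jP jI jPh jIh : Fin n → ℤ)
    (hP : dyadicCube n kP jP ⊆ dyadicCube n (kP - 1) jPh)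
    (hI : dyadicCube n kI jI ⊆ dyadicCube n (kI - 1) jIh)
    (hPhfin : μ (dyadicCube n (kP - 1) jPh) ≠ ⊤)
    (hIhfin : μ (dyadicCube n (kI - 1) jIh) ≠ ⊤)
    (f : (Fin n → ℝ) → ℝ) (hf : Integrable f μ) :
    ((dyadicCube n (kP - 1) jPh ∩ dyadicCube n (kI - 1) jIh = ∅ →
      (∫ x, badPart μ f (dyadicCube n kP jP) (dyadicCube n (kP - 1) jPh) x *
        haarFn μ (dyadicCube n kI jI) (dyadicCube n (kI - 1) jIh) x ∂μ) = 0)) ∧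
    ((dyadicCube n (kP - 1) jPh ⊆ dyadicCube n (kI - 1) jIh ∧
        dyadicCube n (kP - 1) jPh ≠ dyadicCube n (kI - 1) jIh →
      (∫ x, badPart μ f (dyadicCube n kP jP) (dyadicCube n (kP - 1) jPh) x *
        haarFn μ (dyadicCube n kI jI) (dyadicCube n (kI - 1) jIh) x ∂μ) = 0)) ∧
    ((∃ j' : Fin n → ℤ, j' ≠ jP ∧
        dyadicCube n (kI - 1) jIh ⊆ dyadicCube n kP j' ∧
        dyadicCube n kP j' ⊆ dyadicCube n (kP - 1) jPh) →
      (∫ x, badPart μ f (dyadicCube n kP jP) (dyadicCube n (kP - 1) jPh) x *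
        haarFn μ (dyadicCube n kI jI) (dyadicCube n (kI - 1) jIh) x ∂μ) = 0) ∧
    ((∫ x, badPart μ f (dyadicCube n kP jP) (dyadicCube n (kP - 1) jPh) x *
        haarFn μ (dyadicCube n kI jI) (dyadicCube n (kI - 1) jIh) x ∂μ) ≠ 0 →
      |∫ x, badPart μ f (dyadicCube n kP jP) (dyadicCube n (kP - 1) jPh) x *
        haarFn μ (dyadicCube n kI jI) (dyadicCube n (kI - 1) jIh) x ∂μ|
        ≤ 2 * (Real.sqrt (μ (dyadicCube n kI jI)).toReal)⁻¹ *
          ∫ x in dyadicCube n kP jP ∩ dyadicCube n (kI - 1) jIh, |f x| ∂μ) := by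
  set P := dyadicCube n kP jP
  set Ph := dyadicCube n (kP - 1) jPh
  set I := dyadicCube n kI jI
  set Ih := dyadicCube n (kI - 1) jIh
  have hPm : MeasurableSet P := measurableSet_dyadicCube kP jP
  have hIm : MeasurableSet I := measurableSet_dyadicCube kI jI
  have hIhm : MeasurableSet Ih := measurableSet_dyadicCube (kI - 1) jIh
  have disjoint_case : Ph ∩ Ih = ∅ → ∫ x, badPart μ f P Ph x * haarFn μ I Ih x ∂μ = 0 :=
    fun h => integral_badPart_mul_haarFn_of_disjoint hP hI (disjoint_iff_inter_eq_empty.2 h)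
  have ssubset_case : Ph ⊆ Ih ∧ Ph ≠ Ih → ∫ x, badPart μ f P Ph x * haarFn μ I Ih x ∂μ = 0 :=
    fun h => integral_badPart_mul_haarFn_of_subset_or_subset_sdiff hf hPm
      (measurableSet_dyadicCube _ _) hP hPhfin hI (dyadicCube_nonempty _ _)
      (dyadicCube_subset_or_subset_sdiff_of_ssubset (h.1.ssubset_of_ne h.2) jI)
  refine ⟨disjoint_case, ssubset_case, ?_, fun hne => ?_⟩
  · rintro ⟨j', hj', hIhP', hP'Ph⟩
    exact integral_badPart_mul_haarFn_of_subset_sdiff hIm hIhm hI hIhfin fun x hx =>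
      ⟨hP'Ph (hIhP' hx), (dyadicCube_disjoint_of_ne hj').notMem_of_mem_left (hIhP' hx)⟩
  have hIhPh : Ih ⊆ Ph := by
    rcases dyadicCube_superset_or_ssubset_or_disjoint (kP - 1) (kI - 1) jPh jIh with h | h | h
    · exact h
    · exact absurd (ssubset_case ⟨h.1, h.ne⟩) hne
    · exact absurd (disjoint_case (disjoint_iff_inter_eq_empty.1 h)) hne
  calc _ ≤ (√(μ I).toReal)⁻¹ * ∫ x in P ∩ Ih, |f x| ∂μ :=
        abs_integral_badPart_mul_haarFn_le hf hPm hIm hIhm hI hIhfin hIhPh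
    _ ≤ 2 * (√(μ I).toReal)⁻¹ * ∫ x in P ∩ Ih, |f x| ∂μ := by
        rw [mul_assoc]
        exact le_mul_of_one_le_left
          (mul_nonneg (by positivity) (integral_nonneg fun _ => abs_nonneg _)) one_le_two
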